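/- Let r ≥ 1 be an integer, a_r a real number, and l ≥ 1, n ≥ 1 integers with 2l−1 ≤ n. Then Z(2l−1, n)·𝔸_r + [𝒵(2l−1, n), 𝔸_r] = 0, where · denotes the action of a scalar function on a vector field by pointwise multiplication and [·,·] is the Lie bracket of vector fields. (Odd case of the lemma on time-rescaling generators.) -/

import Mathlib

/-- Monomial `x^a * y^b` for integer exponents, zero if an exponent is negative. -/
noncomputable def M (a b : ℤ) : ℝ × ℝ → ℝ :=
  fun p => if 0 ≤ a ∧ 0 ≤ b then p.1 ^ a.toNat * p.2 ^ b.toNat else 0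

/-- The vector field `A(l,k)`. -/
noncomputable def A (l k : ℤ) : ℝ × ℝ → ℝ × ℝ :=
  fun p => (((k : ℝ) - (l : ℝ) + 1) / ((k : ℝ) + 2) * M (l + 1) (k - l) p,
            -(((l : ℝ) + 1) / ((k : ℝ) + 2)) * M l (k - l + 1) p)

/-- The vector field `B(l,k)`. -/
noncomputable def B (l k : ℤ) : ℝ × ℝ → ℝ × ℝ :=
  fun p => (M (l + 1) (k - l) p, M l (k - l + 1) p)

/-- The scalar monomial function `Z(l,k)`. -/
noncomputable def Z (l k : ℤ) : ℝ × ℝ → ℝ := M l (k - l)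

/-- Lie bracket of planar vector fields: `[X,Y](p) = DY(p)(X(p)) - DX(p)(Y(p))`. -/
noncomputable def lieBracket (X Y : ℝ × ℝ → ℝ × ℝ) : ℝ × ℝ → ℝ × ℝ :=
  fun p => fderiv ℝ Y p (X p) - fderiv ℝ X p (Y p)

/-- Pochhammer-type product `(a)^n_b = a (a+b) (a+2b) ⋯ (a+(n-1)b)`. -/
noncomputable def poch (a b : ℝ) (n : ℕ) : ℝ := ∏ j ∈ Finset.range n, (a + (j : ℝ) * b)

/-- The vector field `𝔸_r = A(1,0) + a_r • A(-1,r)`, i.e. `(a_r y^{r+1}, -x)`. -/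
noncomputable def bbA (r : ℤ) (ar : ℝ) : ℝ × ℝ → ℝ × ℝ :=
  fun p => A 1 0 p + ar • A (-1) r p

/-- The transformation generator `𝒵(m,n)`. -/
noncomputable def calZ (r : ℤ) (ar : ℝ) (m n : ℤ) : ℝ × ℝ → ℝ × ℝ :=
  fun p => (1 / ((m : ℝ) - (n : ℝ) - 1)) • A m n p + (1 / ((n : ℝ) + 2)) • B m n p
    - ∑ i ∈ Finset.range (((m + 1) / 2).toNat),
        (ar ^ (i + 1) * ((n : ℝ) + (r : ℝ) * ((i : ℝ) + 1) + 2) *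
            poch ((m : ℝ) - 1) (-2) i /
          poch ((n : ℝ) - (m : ℝ) + 1) ((r : ℝ) + 2) (i + 2)) •
        A (m - 2 * ((i : ℤ) + 1)) (n + r * ((i : ℤ) + 1)) p


/-!
`A(l,k)` is `(k+2)⁻¹` times the Hamiltonian field `X_H = (∂_y H, -∂_x H)` of `H = x^(l+1) y^(k-l+1)`,
`B(m,n)` is `x^m y^(n-m)` times the Euler field `(x, y)`, and `𝔸_r` is the Hamiltonian field of
`x²/2 + a_r y^(r+2)/(r+2)`. For monomial Hamiltonians the bracket with `𝔸_r` is a two-term ladder,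
`[X_{x^i y^j}, 𝔸_r] = j X_{x^(i+1) y^(j-1)} - a_r i X_{x^(i-1) y^(j+r+1)}`,
and the Pochhammer coefficients of `𝒵(2l-1,n)` are exactly those that make the bracket of its sum
telescope. The ladder stops when the `x`-degree reaches `0`, so only its top rung survives, and that
rung cancels against `Z·𝔸_r` and the brackets of the leading `A` and `B` terms.
-/

@[simp] lemma M_natCast (i j : ℕ) (p : ℝ × ℝ) : M i j p = p.1 ^ i * p.2 ^ j := by
  simp [M]

lemma natCast_mul_M_sub_one_left (i j : ℕ) (p : ℝ × ℝ) :
    (i : ℝ) * M (i - 1) j p = i * (p.1 ^ (i - 1) * p.2 ^ j) := by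
  rcases i with _ | i
  · simp
  · simp [M]

lemma natCast_mul_M_sub_one_right (i j : ℕ) (p : ℝ × ℝ) :
    (j : ℝ) * M i (j - 1) p = j * (p.1 ^ i * p.2 ^ (j - 1)) := by
  rcases j with _ | j
  · simp
  · simp [M]

/-- The Hamiltonian field `(∂_y H, -∂_x H)` of `H = x^i y^j`; the truncated exponents `i - 1`,
`j - 1` are harmless because they are multiplied by `i`, `j`. -/
noncomputable def hamField (i j : ℕ) (p : ℝ × ℝ) : ℝ × ℝ :=
  ((j : ℝ) * (p.1 ^ i * p.2 ^ (j - 1)), -(i : ℝ) * (p.1 ^ (i - 1) * p.2 ^ j))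

noncomputable def eulerField (i j : ℕ) (p : ℝ × ℝ) : ℝ × ℝ :=
  (p.1 ^ (i + 1) * p.2 ^ j, p.1 ^ i * p.2 ^ (j + 1))

lemma A_eq_smul_hamField {l k : ℤ} {i j : ℕ} (hl : l = i - 1) (hk : k = i + j - 2)
    (p : ℝ × ℝ) : A l k p = ((i : ℝ) + j)⁻¹ • hamField i j p := by
  subst hl hk
  have h1 : (i : ℤ) - 1 + 1 = i := by ring
  have h2 : (i : ℤ) + j - 2 - (i - 1) = j - 1 := by ring
  simp only [A, hamField, h1, h2, sub_add_cancel, Prod.smul_mk, smul_eq_mul]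
  push_cast
  congr 1
  · linear_combination ((i : ℝ) + j)⁻¹ * natCast_mul_M_sub_one_right i j p
  · linear_combination (-((i : ℝ) + j)⁻¹) * natCast_mul_M_sub_one_left i j p

lemma B_eq_eulerField {l k : ℤ} {i j : ℕ} (hl : l = i) (hk : k = i + j) (p : ℝ × ℝ) :
    B l k p = eulerField i j p := by
  subst hl hk
  have h1 : (i : ℤ) + 1 = (i + 1 : ℕ) := by push_cast; ring
  have h2 : (i : ℤ) + j - i = j := by ring
  have h3 : (j : ℤ) + 1 = (j + 1 : ℕ) := by push_cast; ring
  simp only [B, eulerField, h1, h2, h3, M_natCast]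

lemma Z_eq {l k : ℤ} {i j : ℕ} (hl : l = i) (hk : k = i + j) (p : ℝ × ℝ) :
    Z l k p = p.1 ^ i * p.2 ^ j := by
  subst hl hk
  simp [Z]

lemma bbA_apply (r : ℕ) (ar : ℝ) (p : ℝ × ℝ) :
    bbA r ar p = (ar * p.2 ^ (r + 1), -p.1) := by
  rw [bbA, A_eq_smul_hamField (i := 2) (j := 0) (by norm_num) (by norm_num),
    A_eq_smul_hamField (i := 0) (j := r + 2) (by norm_num) (by push_cast; ring)]
  simp only [hamField, Prod.smul_mk, smul_eq_mul, Prod.mk_add_mk]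
  push_cast
  have : (r : ℝ) + 2 ≠ 0 := by positivity
  congr 1 <;> field_simp <;> ring

lemma differentiable_hamField (i j : ℕ) : Differentiable ℝ (hamField i j) := by
  unfold hamField; fun_prop

lemma differentiable_eulerField (i j : ℕ) : Differentiable ℝ (eulerField i j) := by
  unfold eulerField; fun_prop

lemma hasFDerivAt_monomial (i j : ℕ) (p : ℝ × ℝ) :
    HasFDerivAt (fun q : ℝ × ℝ => q.1 ^ i * q.2 ^ j)
      ((i * p.1 ^ (i - 1) * p.2 ^ j) • ContinuousLinearMap.fst ℝ ℝ ℝ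
        + (j * p.1 ^ i * p.2 ^ (j - 1)) • ContinuousLinearMap.snd ℝ ℝ ℝ) p := by
  have hx := (hasDerivAt_pow i p.1).hasFDerivAt.comp p hasFDerivAt_fst
  have hy := (hasDerivAt_pow j p.2).hasFDerivAt.comp p hasFDerivAt_snd
  refine (hx.mul hy).congr_fderiv ?_
  ext <;> simp <;> ring

lemma hasFDerivAt_bbA (r : ℕ) (ar : ℝ) (p : ℝ × ℝ) :
    HasFDerivAt (bbA r ar)
      ((ContinuousLinearMap.snd ℝ ℝ ℝ).smulRight (ar * (r + 1) * p.2 ^ r, (0 : ℝ))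
        - (ContinuousLinearMap.fst ℝ ℝ ℝ).smulRight ((0 : ℝ), (1 : ℝ))) p := by
  have h := ((hasFDerivAt_monomial 0 (r + 1) p).const_mul ar).prodMk hasFDerivAt_fst.neg
  rw [show bbA r ar = fun q => (ar * (q.1 ^ 0 * q.2 ^ (r + 1)), -q.1) by
    funext q; simp [bbA_apply]]
  refine h.congr_fderiv ?_
  ext <;> simp; ring

namespace VectorField

variable {𝕜 E : Type*} [NontriviallyNormedField 𝕜] [NormedAddCommGroup E] [NormedSpace 𝕜 E]
  {V V₁ W : E → E} {x : E}

lemma lieBracket_sub_left (hV : DifferentiableAt 𝕜 V x) (hV₁ : DifferentiableAt 𝕜 V₁ x) :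
    lieBracket 𝕜 (V - V₁) W x = lieBracket 𝕜 V W x - lieBracket 𝕜 V₁ W x := by
  simp only [lieBracket, Pi.sub_apply, map_sub, fderiv_sub hV hV₁, _root_.sub_apply]
  abel

lemma lieBracket_sum_left {ι : Type*} {s : Finset ι} {V : ι → E → E}
    (hV : ∀ i ∈ s, DifferentiableAt 𝕜 (V i) x) :
    lieBracket 𝕜 (∑ i ∈ s, V i) W x = ∑ i ∈ s, lieBracket 𝕜 (V i) W x := by
  simp only [lieBracket, Finset.sum_apply, map_sum, fderiv_sum hV, _root_.sum_apply,
    Finset.sum_sub_distrib]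

end VectorField

section BracketWithBbA

variable {r : ℕ} {ar : ℝ} {p : ℝ × ℝ}

lemma lieBracket_bbA {X : ℝ × ℝ → ℝ × ℝ} {L₁ L₂ : ℝ × ℝ →L[ℝ] ℝ}
    (h₁ : HasFDerivAt (fun q => (X q).1) L₁ p) (h₂ : HasFDerivAt (fun q => (X q).2) L₂ p) :
    VectorField.lieBracket ℝ X (bbA r ar) p =
      (ar * (r + 1) * p.2 ^ r * (X p).2 - L₁ (bbA r ar p), -(X p).1 - L₂ (bbA r ar p)) := by
  rw [VectorField.lieBracket, (hasFDerivAt_bbA r ar p).fderiv, (h₁.prodMk h₂).fderiv]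
  ext <;> simp
  ring

lemma lieBracket_hamField_bbA (i j : ℕ) :
    VectorField.lieBracket ℝ (hamField i j) (bbA r ar) p =
      (j : ℝ) • hamField (i + 1) (j - 1) p - (ar * i) • hamField (i - 1) (j + r + 1) p := by
  rw [lieBracket_bbA ((hasFDerivAt_monomial _ _ p).const_mul _)
    ((hasFDerivAt_monomial _ _ p).const_mul _), bbA_apply]
  rcases i with _ | _ | i <;> rcases j with _ | _ | j <;> ext <;>
    simp [hamField, -mul_eq_mul_left_iff] <;> ring

lemma lieBracket_eulerField_bbA (i j : ℕ) :
    VectorField.lieBracket ℝ (eulerField i j) (bbA r ar) p =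
      (j : ℝ) • eulerField (i + 1) (j - 1) p - (ar * i) • eulerField (i - 1) (j + r + 1) p
        + (ar * r * p.1 ^ i * p.2 ^ (j + r + 1), 0) := by
  rw [lieBracket_bbA (hasFDerivAt_monomial _ _ p) (hasFDerivAt_monomial _ _ p), bbA_apply]
  rcases i with _ | _ | i <;> rcases j with _ | _ | j <;> ext <;> simp [eulerField] <;> ring

end BracketWithBbA

lemma poch_succ (a b : ℝ) (n : ℕ) : poch a b (n + 1) = poch a b n * (a + n * b) :=
  Finset.prod_range_succ _ n

lemma poch_pos {a b : ℝ} (ha : 0 < a) (hb : 0 ≤ b) (n : ℕ) : 0 < poch a b n :=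
  Finset.prod_pos fun j _ => by positivity

lemma poch_two_mul_neg_two (k : ℕ) : poch (2 * k) (-2) (k + 1) = 0 :=
  Finset.prod_eq_zero (Finset.self_mem_range_succ k) (by ring)

/-- The coefficient of `hamField (2 (k - i)) (d + 1 + (r + 2)(i + 1))` in `𝒵(2k+1, 2k+1+d)`. -/
noncomputable def ladderCoeff (r d k : ℕ) (ar : ℝ) (i : ℕ) : ℝ :=
  ar ^ (i + 1) * poch (2 * k) (-2) i / poch (d + 1) (r + 2) (i + 2)

lemma ladderCoeff_succ_mul (r d k : ℕ) (ar : ℝ) (i : ℕ) :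
    ladderCoeff r d k ar (i + 1) * (d + 1 + (r + 2) * (i + 2) : ℝ)
      = ladderCoeff r d k ar i * (ar * (2 * k - 2 * i)) := by
  have hpos := (poch_pos (a := d + 1) (b := r + 2) (by positivity) (by positivity) (i + 2)).ne'
  have hD : (d + 1 + (r + 2) * (i + 2) : ℝ) ≠ 0 := by positivity
  simp only [ladderCoeff, poch_succ]
  push_cast
  field_simp
  ring

lemma sum_ladderCoeff_smul_lieBracket (r d k : ℕ) (ar : ℝ) (p : ℝ × ℝ) :
    ∑ i ∈ Finset.range (k + 1), ladderCoeff r d k ar i •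
        VectorField.lieBracket ℝ (hamField (2 * (k - i)) (d + 1 + (r + 2) * (i + 1))) (bbA r ar) p
      = (ar / (d + 1)) • hamField (2 * k + 1) (d + r + 2) p := by
  set g : ℕ → ℝ × ℝ := fun i =>
    (ladderCoeff r d k ar i * (d + 1 + (r + 2) * (i + 1) : ℝ)) •
      hamField (2 * k + 1 - 2 * i) (d + (r + 2) * (i + 1)) p with hg
  have hterm : ∀ i ∈ Finset.range (k + 1), ladderCoeff r d k ar i •
      VectorField.lieBracket ℝ (hamField (2 * (k - i)) (d + 1 + (r + 2) * (i + 1))) (bbA r ar) p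
        = g i - g (i + 1) := by
    intro i hi
    have hik : i ≤ k := Nat.lt_succ_iff.mp (Finset.mem_range.mp hi)
    rw [lieBracket_hamField_bbA, hg]
    dsimp only
    rw [show 2 * (k - i) + 1 = 2 * k + 1 - 2 * i by omega,
      show 2 * (k - i) - 1 = 2 * k + 1 - 2 * (i + 1) by omega,
      show d + 1 + (r + 2) * (i + 1) - 1 = d + (r + 2) * (i + 1) by omega,
      show d + 1 + (r + 2) * (i + 1) + r + 1 = d + (r + 2) * (i + 1 + 1) by ring]
    have hrec := ladderCoeff_succ_mul r d k ar i
    push_cast at hrec ⊢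
    rw [Nat.cast_sub hik, show (i : ℝ) + 1 + 1 = i + 2 by ring, hrec]
    module
  have hlast : ladderCoeff r d k ar (k + 1) = 0 := by
    simp [ladderCoeff, poch_two_mul_neg_two]
  have hfirst : ladderCoeff r d k ar 0 * (d + 1 + (r + 2) * (0 + 1) : ℝ) = ar / (d + 1) := by
    simp only [ladderCoeff, poch, Finset.prod_range_succ, Finset.prod_range_zero]
    field_simp
    ring
  rw [Finset.sum_congr rfl hterm, Finset.sum_range_sub', hg]
  dsimp only
  rw [hlast, zero_mul, zero_smul, sub_zero, Nat.cast_zero, hfirst]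
  congr 2
  ring

lemma calZ_odd_eq {m n : ℤ} {r k d : ℕ} (ar : ℝ) (hm : m = 2 * k + 1) (hn : n = m + d) :
    calZ r ar m n = (-(((d : ℝ) + 1) * (2 * k + d + 3))⁻¹) • hamField (2 * k + 2) (d + 1)
      + ((2 * k + d + 3 : ℝ))⁻¹ • eulerField (2 * k + 1) d
      - ∑ i ∈ Finset.range (k + 1),
          ladderCoeff r d k ar i • hamField (2 * (k - i)) (d + 1 + (r + 2) * (i + 1)) := by
  subst hm hn
  funext p
  have hL : ((2 * (k : ℤ) + 1 + 1) / 2).toNat = k + 1 := by omega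
  simp only [calZ, hL, Pi.add_apply, Pi.sub_apply, Pi.smul_apply, Finset.sum_apply]
  rw [A_eq_smul_hamField (i := 2 * k + 2) (j := d + 1) (by push_cast; ring) (by push_cast; ring),
    B_eq_eulerField (i := 2 * k + 1) (j := d) (by push_cast; ring) (by push_cast; ring), smul_smul]
  have hd : (d : ℝ) + 1 ≠ 0 := by positivity
  have hD : (2 * k + d + 3 : ℝ) ≠ 0 := by positivity
  congr 1
  · congr 2
    · push_cast
      rw [show (2 * k + 1 - (2 * k + 1 + d) - 1 : ℝ) = -(d + 1) by ring]
      field_simp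
      ring
    · push_cast
      ring
  · refine Finset.sum_congr rfl fun i hi => ?_
    have hik : i ≤ k := Nat.lt_succ_iff.mp (Finset.mem_range.mp hi)
    rw [A_eq_smul_hamField (i := 2 * (k - i)) (j := d + 1 + (r + 2) * (i + 1))
      (by push_cast [hik]; ring) (by push_cast [hik]; ring), smul_smul]
    congr 1
    simp only [ladderCoeff]
    push_cast [hik]
    rw [show (2 * k + 1 - 1 : ℝ) = 2 * k by ring,
      show (2 * k + 1 + d - (2 * k + 1) + 1 : ℝ) = d + 1 by ring,
      show (2 * (k - i) + (d + 1 + (r + 2) * (i + 1)) : ℝ)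
        = 2 * k + 1 + d + r * (i + 1) + 2 by ring]
    have : (2 * k + 1 + d + r * (i + 1) + 2 : ℝ) ≠ 0 := by positivity
    field_simp

lemma lieBracket_calZ_odd_bbA {m n : ℤ} {r k d : ℕ} (ar : ℝ) (hm : m = 2 * k + 1)
    (hn : n = m + d) (p : ℝ × ℝ) :
    lieBracket (calZ r ar m n) (bbA r ar) p =
      (-(((d : ℝ) + 1) * (2 * k + d + 3))⁻¹) •
          VectorField.lieBracket ℝ (hamField (2 * k + 2) (d + 1)) (bbA r ar) p
        + ((2 * k + d + 3 : ℝ))⁻¹ •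
          VectorField.lieBracket ℝ (eulerField (2 * k + 1) d) (bbA r ar) p
        - (ar / (d + 1)) • hamField (2 * k + 1) (d + r + 2) p := by
  have hH := (differentiable_hamField (2 * k + 2) (d + 1)).differentiableAt (x := p)
  have hE := (differentiable_eulerField (2 * k + 1) d).differentiableAt (x := p)
  have hW : ∀ i ∈ Finset.range (k + 1), DifferentiableAt ℝ
      (ladderCoeff r d k ar i • hamField (2 * (k - i)) (d + 1 + (r + 2) * (i + 1))) p :=
    fun i _ => ((differentiable_hamField _ _).const_smul _).differentiableAt
  rw [calZ_odd_eq ar hm hn, ← sum_ladderCoeff_smul_lieBracket,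
    show lieBracket = VectorField.lieBracket ℝ from rfl,
    VectorField.lieBracket_sub_left ((hH.const_smul _).add (hE.const_smul _)) (.sum hW),
    VectorField.lieBracket_add_left (hH.const_smul _) (hE.const_smul _),
    VectorField.lieBracket_const_smul_left hH, VectorField.lieBracket_const_smul_left hE,
    VectorField.lieBracket_sum_left hW]
  congr 1
  exact Finset.sum_congr rfl fun i _ =>
    VectorField.lieBracket_const_smul_left (differentiable_hamField _ _).differentiableAt

theorem stmt8_general (r n : ℤ) (ar : ℝ) (l : ℕ) (hr : 1 ≤ r) (hl : 1 ≤ l)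
    (hln : 2 * (l : ℤ) - 1 ≤ n) :
    (fun p => Z (2 * (l : ℤ) - 1) n p • bbA r ar p
        + lieBracket (calZ r ar (2 * (l : ℤ) - 1) n) (bbA r ar) p)
      = fun _ => (0 : ℝ × ℝ) := by
  obtain ⟨k, rfl⟩ : ∃ k, l = k + 1 := ⟨l - 1, by omega⟩
  obtain ⟨d, hd⟩ : ∃ d : ℕ, n = 2 * ((k + 1 : ℕ) : ℤ) - 1 + d :=
    ⟨(n - (2 * (k + 1 : ℕ) - 1)).toNat, by omega⟩
  lift r to ℕ using by omega
  have hm : 2 * ((k + 1 : ℕ) : ℤ) - 1 = 2 * k + 1 := by push_cast; ring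
  funext p
  rw [lieBracket_calZ_odd_bbA ar hm hd, lieBracket_hamField_bbA, lieBracket_eulerField_bbA,
    Z_eq (i := 2 * k + 1) (j := d) (by rw [hm]; push_cast; ring) (by rw [hd, hm]; push_cast; ring),
    bbA_apply]
  have h₁ : (d : ℝ) + 1 ≠ 0 := by positivity
  have h₂ : (2 * k + d + 3 : ℝ) ≠ 0 := by positivity
  rcases d with _ | d <;> ext <;> simp [hamField, eulerField] <;> field_simp <;> ring

/-- Odd case of the time-rescaling lemma: `Z(2l-1,n)·𝔸_r + [𝒵(2l-1,n), 𝔸_r] = 0`. -/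
theorem stmt8 (r n : ℤ) (ar : ℝ) (l : ℕ) (hr : 1 ≤ r) (hl : 1 ≤ l) (hn : 1 ≤ n)
    (hln : 2 * (l : ℤ) - 1 ≤ n) :
    (fun p => Z (2 * (l : ℤ) - 1) n p • bbA r ar p
        + lieBracket (calZ r ar (2 * (l : ℤ) - 1) n) (bbA r ar) p)
      = fun _ => (0 : ℝ × ℝ) :=
  stmt8_general r n ar l hr hl hln
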